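/- arXiv:1803.00199 — 3 statements merged into one kernel-verified Lean document; each statement's English description precedes it below -/
import Mathlib

section
/- Let n ≥ 3 be odd and let E be an ellipsoid in ℝⁿ. Then E is polynomially integrable: there exist continuous functions a_0, …, a_{n-1} on S^{n-1} such that V_{n-1}(E ∩ {ξ^⊥ + tξ}) = Σ_{k=0}^{n-1} a_k(ξ) t^k for every ξ ∈ S^{n-1} and every t for which E ∩ {ξ^⊥ + tξ} is nonempty. -/
/-!
Write `E = L '' B + b` with `B` the unit ball. Pulled back by `x ↦ L x + b`, the hyperplane
`⟪x, ξ⟫ = t` becomes `⟪u, L† ξ⟫ = t - ⟪b, ξ⟫`, which cuts `B` in a ball of radius `√(1 - s²)`,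
`s = (t - ⟪b, ξ⟫) / ‖L† ξ‖`, lying in a translate of `(L† ξ)ᗮ`; and `L` maps `(L† ξ)ᗮ` onto `ξᗮ`
with Jacobian `|det L| / ‖L† ξ‖`. Hence
`A_{E,ξ}(t) = |det L| / ‖L† ξ‖ · ω_{n-1} · (1 - s²)^((n-1)/2)`, where `ω_{n-1}` is the volume of
the unit `(n-1)`-ball; for odd `n` this is a polynomial in `t` of degree `n - 1` whose coefficients
are continuous in `ξ`.
-/

open MeasureTheory Metric Set
open scoped RealInnerProductSpace

noncomputable section

/-- Euclidean space `ℝⁿ`. -/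
abbrev Euc (n : ℕ) := EuclideanSpace ℝ (Fin n)

/-- The parallel section function: `A_{K,ξ}(t) = V_{n-1}(K ∩ {ξ^⊥ + tξ})`, the
`(n-1)`-dimensional Lebesgue measure of the section of `K` by the hyperplane
`ξ^⊥ + tξ`, computed via the isometric parametrization `y ↦ tξ + y` of this
hyperplane by the subspace `ξ^⊥ = (ℝ ∙ ξ)ᗮ`. -/
def parallelSection {n : ℕ} (K : Set (Euc n)) (ξ : Euc n) (t : ℝ) : ℝ :=
  (volume {y : (ℝ ∙ ξ)ᗮ | t • ξ + (y : Euc n) ∈ K}).toReal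

/-- `K` is polynomially integrable: there are an integer `N ≥ 0` and functions
`a_0, …, a_N` on `S^{n-1}` such that `A_{K,ξ}(t) = ∑_{k=0}^N a_k(ξ) t^k` for every
`ξ ∈ S^{n-1}` and every `t` for which the section `K ∩ {ξ^⊥ + tξ}` is nonempty. -/
def PolyIntegrable {n : ℕ} (K : Set (Euc n)) : Prop :=
  ∃ (N : ℕ) (a : ℕ → (sphere (0 : Euc n) 1 → ℝ)),
    ∀ ξ : sphere (0 : Euc n) 1, ∀ t : ℝ,
      (K ∩ {x : Euc n | ⟪x, (ξ : Euc n)⟫ = t}).Nonempty →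
      parallelSection K (ξ : Euc n) t = ∑ k ∈ Finset.range (N + 1), a k ξ * t ^ k

/-- An ellipsoid in `ℝⁿ`: the image of the closed unit Euclidean ball under an
invertible affine transformation. -/
def IsEllipsoid {n : ℕ} (E : Set (Euc n)) : Prop :=
  ∃ T : Euc n ≃ᵃ[ℝ] Euc n, E = T '' closedBall (0 : Euc n) 1

open Module

theorem exists_continuous_coeff_mul_one_sub_sq_pow {α : Type*} [TopologicalSpace α]
    {c β γ : α → ℝ} (hc : Continuous c) (hβ : Continuous β) (hγ : Continuous γ) (k : ℕ) :
    ∃ a : ℕ → α → ℝ, (∀ j, Continuous (a j)) ∧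
      ∀ x t, c x * (1 - (β x * (t - γ x)) ^ 2) ^ k =
        ∑ j ∈ Finset.range (2 * k + 1), a j x * t ^ j := by
  open Polynomial in
  -- a polynomial in `t` whose coefficients are polynomials in `(β x, γ x)`, hence continuous in `x`
  let Q : (MvPolynomial (Fin 2) ℝ)[X] :=
    (1 - (C (MvPolynomial.X 0) * (X - C (MvPolynomial.X 1))) ^ 2) ^ k
  let θ : α → Fin 2 → ℝ := fun x => ![β x, γ x]
  have hθ : Continuous θ := continuous_pi fun i => by fin_cases i <;> simpa [θ]
  refine ⟨fun j x => c x * MvPolynomial.eval (θ x) (Q.coeff j),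
    fun j => hc.mul ((MvPolynomial.continuous_eval _).comp hθ), fun x t => ?_⟩
  have hQ : Q.natDegree ≤ 2 * k := by
    refine natDegree_pow_le.trans ?_
    rw [mul_comm]
    gcongr
    compute_degree
  have hdeg := (natDegree_map_le (f := MvPolynomial.eval (θ x)) (p := Q)).trans_lt
    (Nat.lt_succ_of_le hQ)
  calc c x * (1 - (β x * (t - γ x)) ^ 2) ^ k
      = c x * (Q.map (MvPolynomial.eval (θ x))).eval t := by simp [Q, θ]
    _ = _ := by simp [eval_eq_sum_range' hdeg, Finset.mul_sum, coeff_map, mul_assoc]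

theorem LinearMap.volume_image_eq_normDet_mul {U W : Type*} [NormedAddCommGroup U]
    [InnerProductSpace ℝ U] [FiniteDimensional ℝ U] [MeasurableSpace U] [BorelSpace U]
    [NormedAddCommGroup W] [InnerProductSpace ℝ W] [FiniteDimensional ℝ W] [MeasurableSpace W]
    [BorelSpace W] (f : U →ₗ[ℝ] W) (h : finrank ℝ U = finrank ℝ W) (s : Set U) :
    volume (f '' s) = ENNReal.ofReal f.normDet * volume s := by
  rw [← InnerProductSpace.euclideanHausdorffMeasure_eq_volume (V := W), ← h,
    f.euclideanHausdorffMeasure_image_eq_normDet_mul_volume]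

section InnerProductSpace

variable {V : Type*} [NormedAddCommGroup V] [InnerProductSpace ℝ V]

theorem orthonormal_finCons {m : ℕ} {v : V} (hv : ‖v‖ = 1) {f : Fin m → V}
    (hf : Orthonormal ℝ f) (hvf : ∀ i, ⟪v, f i⟫ = 0) :
    Orthonormal ℝ (Fin.cons v f : Fin (m + 1) → V) := by
  rw [orthonormal_iff_ite] at hf ⊢
  intro i j
  cases i using Fin.cases <;> cases j using Fin.cases <;>
    simp [hf, hvf, real_inner_comm v, hv, Fin.succ_ne_zero, (Fin.succ_ne_zero _).symm]

theorem OrthonormalBasis.exists_coe_eq_finCons {m : ℕ} (hV : finrank ℝ V = m + 1) {v : V}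
    (hv : ‖v‖ = 1) {f : Fin m → V} (hf : Orthonormal ℝ f) (hvf : ∀ i, ⟪v, f i⟫ = 0) :
    ∃ B : OrthonormalBasis (Fin (m + 1)) ℝ V, ⇑B = Fin.cons v f := by
  have hB := orthonormal_finCons hv hf hvf
  let b := basisOfOrthonormalOfCardEqFinrank hB (by simp [hV])
  exact ⟨b.toOrthonormalBasis (by simpa [b] using hB), by simp [b]⟩

theorem preimage_add_closedBall_of_mem_orthogonal (K : Submodule ℝ V) {w : V} (hw : w ∈ Kᗮ)
    (hw1 : ‖w‖ ≤ 1) :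
    {z : K | w + z ∈ closedBall (0 : V) 1} = closedBall 0 √(1 - ‖w‖ ^ 2) := by
  ext z
  have hpyth : ‖w + z‖ ^ 2 = ‖w‖ ^ 2 + ‖(z : V)‖ ^ 2 := by
    simpa only [sq] using
      norm_add_sq_eq_norm_sq_add_norm_sq_real (K.inner_left_of_mem_orthogonal z.2 hw)
  rw [mem_ofPred_eq, mem_closedBall_zero_iff, mem_closedBall_zero_iff,
    ← sq_le_one_iff₀ (norm_nonneg _), Real.le_sqrt (norm_nonneg _) (by nlinarith [norm_nonneg w]),
    hpyth, Submodule.coe_norm]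
  constructor <;> intro h <;> linarith

variable [FiniteDimensional ℝ V]

theorem finrank_orthogonal_span_singleton_add_one {v : V} (hv : v ≠ 0) :
    finrank ℝ (ℝ ∙ v)ᗮ + 1 = finrank ℝ V := by
  rw [← finrank_span_singleton (K := ℝ) hv, add_comm, Submodule.finrank_add_finrank_orthogonal]

namespace LinearMap

variable (L : V →ₗ[ℝ] V)

theorem adjoint_apply_ne_zero (hL : Function.Surjective L) {ξ : V} (hξ : ξ ≠ 0) :
    L.adjoint ξ ≠ 0 := by
  intro h
  obtain ⟨x, rfl⟩ := hL ξ
  have := L.adjoint_inner_left x (L x)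
  rw [h, inner_zero_left] at this
  exact hξ (inner_self_eq_zero.mp this.symm)

theorem abs_inner_sub_le_norm_adjoint (b : V) {u : V} (hu : ‖u‖ ≤ 1) (ξ : V) :
    |⟪L u + b, ξ⟫ - ⟪b, ξ⟫| ≤ ‖L.adjoint ξ‖ := by
  rw [inner_add_left, add_sub_cancel_right, ← L.adjoint_inner_right]
  exact (abs_real_inner_le_norm _ _).trans (mul_le_of_le_one_left (norm_nonneg _) hu)

theorem mapsTo_orthogonal_span_adjoint (ξ : V) :
    ∀ x ∈ (ℝ ∙ L.adjoint ξ)ᗮ, L x ∈ (ℝ ∙ ξ)ᗮ := by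
  intro x hx
  rw [Submodule.mem_orthogonal_singleton_iff_inner_right] at hx ⊢
  rwa [← L.adjoint_inner_left]

/-- Block form of `L` in orthonormal bases `(η, …)` and `(ξ, …)` with `η ∥ L† ξ`: its first row
is `(‖L† ξ‖, 0, …, 0)`, and the remaining block is `L` restricted to `(L† ξ)ᗮ → ξᗮ`. -/
theorem abs_det_eq_norm_adjoint_mul_normDet {ξ : V} (hξ : ‖ξ‖ = 1) (ha : L.adjoint ξ ≠ 0) :
    |L.det| = ‖L.adjoint ξ‖ * (L.restrict (L.mapsTo_orthogonal_span_adjoint ξ)).normDet := by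
  set a := L.adjoint ξ
  have hξ0 : ξ ≠ 0 := by rintro rfl; simp at hξ
  have : Nontrivial V := ⟨⟨ξ, 0, hξ0⟩⟩
  obtain ⟨m, hm⟩ : ∃ m, finrank ℝ V = m + 1 := Nat.exists_eq_succ_of_ne_zero finrank_pos.ne'
  have : Fact (finrank ℝ V = m + 1) := ⟨hm⟩
  let bX := OrthonormalBasis.fromOrthogonalSpanSingleton (𝕜 := ℝ) m hξ0
  let bA := OrthonormalBasis.fromOrthogonalSpanSingleton (𝕜 := ℝ) m ha
  have hη : ‖‖a‖⁻¹ • a‖ = 1 := by simp [norm_smul, ha]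
  obtain ⟨B, hB⟩ := OrthonormalBasis.exists_coe_eq_finCons hm hξ
    (bX.orthonormal.comp_linearIsometry (ℝ ∙ ξ)ᗮ.subtypeₗᵢ)
    (fun i => Submodule.mem_orthogonal_singleton_iff_inner_right.mp (bX i).2)
  obtain ⟨B', hB'⟩ := OrthonormalBasis.exists_coe_eq_finCons hm hη
    (bA.orthonormal.comp_linearIsometry (ℝ ∙ a)ᗮ.subtypeₗᵢ)
    (fun i => by
      simp [real_inner_smul_left, Submodule.mem_orthogonal_singleton_iff_inner_right.mp (bA i).2])
  have hM : ∀ i j, L.toMatrix B'.toBasis B.toBasis i j = ⟪B i, L (B' j)⟫ := by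
    simp [LinearMap.toMatrix_apply, OrthonormalBasis.repr_apply_apply]
  have hL : ∀ x, ⟪ξ, L x⟫ = ⟪a, x⟫ := fun x => (L.adjoint_inner_left x ξ).symm
  have hM00 : ⟪B 0, L (B' 0)⟫ = ‖a‖ := by
    simp [hB, hB', hL, real_inner_smul_right, sq, ha]
  have hM0 : ∀ j : Fin m, ⟪B 0, L (B' j.succ)⟫ = 0 := by
    simp [hB, hB', hL, fun j => Submodule.mem_orthogonal_singleton_iff_inner_right.mp (bA j).2]
  have hMsub : ∀ i j : Fin m, ⟪B i.succ, L (B' j.succ)⟫ =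
      (L.restrict (L.mapsTo_orthogonal_span_adjoint ξ)).toMatrix bA.toBasis bX.toBasis i j := by
    simp [hB, hB', LinearMap.toMatrix_apply, OrthonormalBasis.repr_apply_apply]
  rw [← L.normDet_eq_abs_det, L.normDet_eq_norm_det_toMatrix B' B,
    LinearMap.normDet_eq_norm_det_toMatrix _ bA bX, Matrix.det_succ_row_zero, Fin.sum_univ_succ]
  simp [hM, hM00, hM0, Matrix.submatrix, hMsub]
  rfl

theorem exists_section_affine_image_eq (b : V) {ξ : V} (hξ : ‖ξ‖ = 1) (t : ℝ) {w : V}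
    (hw : ⟪w, L.adjoint ξ⟫ = t - ⟪b, ξ⟫) (K : Set V) :
    ∃ v : (ℝ ∙ ξ)ᗮ, {y : (ℝ ∙ ξ)ᗮ | t • ξ + (y : V) ∈ (fun x => L x + b) '' K} =
      (v + ·) '' (L.restrict (L.mapsTo_orthogonal_span_adjoint ξ) ''
        {z : (ℝ ∙ L.adjoint ξ)ᗮ | w + z ∈ K}) := by
  have hL : ∀ x, ⟪L x, ξ⟫ = ⟪x, L.adjoint ξ⟫ := fun x => (L.adjoint_inner_right x ξ).symm
  have hv : L w + b - t • ξ ∈ (ℝ ∙ ξ)ᗮ := by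
    rw [Submodule.mem_orthogonal_singleton_iff_inner_left, inner_sub_left, inner_add_left, hL, hw,
      real_inner_smul_left, real_inner_self_eq_norm_sq, hξ]
    ring
  refine ⟨⟨_, hv⟩, ?_⟩
  rw [← image_comp]
  ext y
  simp only [mem_ofPred_eq, mem_image, Function.comp_apply]
  constructor
  · rintro ⟨u, hu, huy⟩
    have hLu : L u = t • ξ + y - b := eq_sub_of_add_eq huy
    have hz : u - w ∈ (ℝ ∙ L.adjoint ξ)ᗮ := by
      have hy := Submodule.mem_orthogonal_singleton_iff_inner_left.mp y.2
      rw [Submodule.mem_orthogonal_singleton_iff_inner_left, inner_sub_left, ← hL, hLu, hw,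
        inner_sub_left, inner_add_left, real_inner_smul_left, real_inner_self_eq_norm_sq, hξ, hy]
      ring
    refine ⟨⟨u - w, hz⟩, by simpa using hu, Subtype.ext ?_⟩
    simp only [Submodule.coe_add, LinearMap.coe_restrict_apply, map_sub]
    rw [hLu]
    abel
  · rintro ⟨z, hz, rfl⟩
    refine ⟨w + z, hz, ?_⟩
    simp only [Submodule.coe_add, LinearMap.coe_restrict_apply, map_add]
    abel

variable [MeasurableSpace V] [BorelSpace V]

theorem volume_section_affine_image_closedBall (b : V) {ξ : V} (hξ : ‖ξ‖ = 1)
    (ha : L.adjoint ξ ≠ 0) {t : ℝ} (ht : |t - ⟪b, ξ⟫| ≤ ‖L.adjoint ξ‖) :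
    volume {y : (ℝ ∙ ξ)ᗮ | t • ξ + (y : V) ∈ (fun x => L x + b) '' closedBall 0 1} =
      ENNReal.ofReal (|L.det| / ‖L.adjoint ξ‖) *
        volume (closedBall (0 : (ℝ ∙ L.adjoint ξ)ᗮ) √(1 - ((t - ⟪b, ξ⟫) / ‖L.adjoint ξ‖) ^ 2)) := by
  set a := L.adjoint ξ
  set τ := t - ⟪b, ξ⟫
  have hna : 0 < ‖a‖ := norm_pos_iff.mpr ha
  set w := (τ / ‖a‖ ^ 2) • a
  have hw : ⟪w, a⟫ = τ := by
    rw [real_inner_smul_left, real_inner_self_eq_norm_sq, div_mul_cancel₀ _ (by positivity)]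
  have hw_perp : w ∈ ((ℝ ∙ a)ᗮ)ᗮ := Submodule.le_orthogonal_orthogonal _
    (Submodule.smul_mem _ _ (Submodule.mem_span_singleton_self a))
  have hw_norm : ‖w‖ = |τ / ‖a‖| := by
    rw [norm_smul, Real.norm_eq_abs, abs_div, abs_div, abs_of_pos (by positivity : 0 < ‖a‖ ^ 2),
      abs_of_pos hna]
    field_simp
  have hw1 : ‖w‖ ≤ 1 := by
    rw [hw_norm, abs_div, abs_of_pos hna]
    exact div_le_one_of_le₀ ht hna.le
  have hrank : finrank ℝ (ℝ ∙ a)ᗮ = finrank ℝ (ℝ ∙ ξ)ᗮ := by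
    have := finrank_orthogonal_span_singleton_add_one ha
    have := finrank_orthogonal_span_singleton_add_one (ne_zero_of_norm_ne_zero (hξ ▸ one_ne_zero))
    omega
  obtain ⟨v, hS⟩ := L.exists_section_affine_image_eq b hξ t hw (closedBall 0 1)
  rw [hS, image_add_left, measure_preimage_add, LinearMap.volume_image_eq_normDet_mul _ hrank,
    preimage_add_closedBall_of_mem_orthogonal _ hw_perp hw1, hw_norm, sq_abs,
    L.abs_det_eq_norm_adjoint_mul_normDet hξ ha, mul_div_cancel_left₀ _ hna.ne']

theorem toReal_volume_section_affine_image_closedBall {k : ℕ} (hk : k ≠ 0)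
    (hV : finrank ℝ V = 2 * k + 1) (b : V) {ξ : V} (hξ : ‖ξ‖ = 1) (ha : L.adjoint ξ ≠ 0) {t : ℝ}
    (ht : |t - ⟪b, ξ⟫| ≤ ‖L.adjoint ξ‖) :
    (volume {y : (ℝ ∙ ξ)ᗮ | t • ξ + (y : V) ∈ (fun x => L x + b) '' closedBall 0 1}).toReal =
      |L.det| / ‖L.adjoint ξ‖ * (Real.pi ^ k / k.factorial) * (1 - ((t - ⟪b, ξ⟫) / ‖L.adjoint ξ‖) ^ 2) ^ k := by
  have hrank : finrank ℝ (ℝ ∙ L.adjoint ξ)ᗮ = 2 * k := by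
    have := finrank_orthogonal_span_singleton_add_one ha
    omega
  have : Nontrivial (ℝ ∙ L.adjoint ξ)ᗮ := Module.nontrivial_of_finrank_pos (R := ℝ) (by omega)
  have hs : 0 ≤ 1 - ((t - ⟪b, ξ⟫) / ‖L.adjoint ξ‖) ^ 2 := by
    rw [sub_nonneg, sq_le_one_iff_abs_le_one, abs_div, abs_norm]
    exact div_le_one_of_le₀ ht (norm_nonneg _)
  rw [L.volume_section_affine_image_closedBall b hξ ha ht,
    InnerProductSpace.volume_closedBall_of_dim_even hrank, hrank, ENNReal.toReal_mul,
    ENNReal.toReal_mul, ENNReal.toReal_pow, ENNReal.toReal_ofReal (by positivity),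
    ENNReal.toReal_ofReal (Real.sqrt_nonneg _), ENNReal.toReal_ofReal (by positivity), pow_mul,
    Real.sq_sqrt hs]
  ring

end LinearMap

end InnerProductSpace

/-- Let `n ≥ 3` be odd and let `E` be an ellipsoid in `ℝⁿ`. Then `E`
is polynomially integrable: there exist continuous functions `a_0, …, a_{n-1}` on
`S^{n-1}` such that `V_{n-1}(E ∩ {ξ^⊥ + tξ}) = ∑_{k=0}^{n-1} a_k(ξ) t^k` for every
`ξ ∈ S^{n-1}` and every `t` for which `E ∩ {ξ^⊥ + tξ}` is nonempty. -/
theorem ellipsoid_polyIntegrable_of_odd_dim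
    (n : ℕ) (hn : 3 ≤ n) (hno : Odd n)
    (E : Set (Euc n)) (hE : IsEllipsoid E) :
    ∃ a : ℕ → (sphere (0 : Euc n) 1 → ℝ),
      (∀ k ≤ n - 1, Continuous (a k)) ∧
      ∀ ξ : sphere (0 : Euc n) 1, ∀ t : ℝ,
        (E ∩ {x : Euc n | ⟪x, (ξ : Euc n)⟫ = t}).Nonempty →
        parallelSection E (ξ : Euc n) t = ∑ k ∈ Finset.range (n - 1 + 1), a k ξ * t ^ k := by
  obtain ⟨T, rfl⟩ := hE
  obtain ⟨k, rfl⟩ := hno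
  set L := T.linear.toLinearMap
  set b := T 0
  have hT : ⇑T = fun x => L x + b := T.toAffineMap.decomp
  have hadj (ξ : sphere (0 : Euc (2 * k + 1)) 1) : L.adjoint ξ ≠ 0 :=
    L.adjoint_apply_ne_zero T.linear.surjective (ne_zero_of_mem_unit_sphere ξ)
  have hnorm : Continuous fun ξ : sphere (0 : Euc (2 * k + 1)) 1 => ‖L.adjoint ξ‖ :=
    (L.adjoint.continuous_of_finiteDimensional.comp continuous_subtype_val).norm
  obtain ⟨a, ha_cont, ha_eq⟩ := exists_continuous_coeff_mul_one_sub_sq_pow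
    (c := fun ξ : sphere (0 : Euc (2 * k + 1)) 1 =>
      |L.det| / ‖L.adjoint ξ‖ * (Real.pi ^ k / k.factorial))
    (β := fun ξ => ‖L.adjoint ξ‖⁻¹) (γ := fun ξ => ⟪b, (ξ : Euc (2 * k + 1))⟫)
    ((continuous_const.div hnorm fun ξ => norm_ne_zero_iff.mpr (hadj ξ)).mul continuous_const)
    (hnorm.inv₀ fun ξ => norm_ne_zero_iff.mpr (hadj ξ))
    (continuous_const.inner continuous_subtype_val) k
  refine ⟨a, fun j _ => ha_cont j, ?_⟩
  rintro ξ t ⟨_, ⟨u, hu, rfl⟩, rfl⟩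
  rw [parallelSection, hT, L.toReal_volume_section_affine_image_closedBall (by omega)
      finrank_euclideanSpace_fin b (norm_eq_of_mem_sphere ξ) (hadj ξ)
      (by simpa [hT] using L.abs_inner_sub_le_norm_adjoint b (mem_closedBall_zero_iff.mp hu) ξ),
    Nat.add_sub_cancel, ← ha_eq]
  ring
end
end

section
/- Let n ≥ 2, let m be an odd positive integer, and let K be a convex body in ℝⁿ containing the origin in its interior, with radial function ρ_K. Set r₀ = min_{θ ∈ S^{n-1}} ρ_K(θ). Then the function t ↦ ∫_{S^{n-1}} (ρ_K(θ)² − t²)^{m/2} dθ does not coincide with any polynomial on the interval (−r₀, r₀). -/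
/-!
Write `a = m / 2` and `σ = ρ_K²`, so that `σ ≥ r₀²`. For `|t| < r₀` the binomial series
`(σ - t²)^a = ∑ₖ C(a, k) σ^(a-k) (-t²)^k` is dominated by `∑ₖ |C(a, k)| (t² / r₀²)^k σ^a`, so it can
be integrated termwise: the integral is the even power series `∑ₖ C(a, k) (-1)^k Iₖ t^(2k)` with
`Iₖ = ∫ σ^(a-k) > 0`. As `a` is not a natural number, no `C(a, k)` vanishes, whereas a polynomial
agreeing with this series near `0` would force its coefficients of high degree to vanish.
-/

open MeasureTheory Metric Set
open scoped RealInnerProductSpace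

noncomputable section

/-- The radial function of `K` with respect to the point `x`:
`ρ_{K-x}(θ) = sup {a ≥ 0 : x + a • θ ∈ K}` (equal to `0` if this set is empty,
since `sSup ∅ = 0` in `ℝ`). For `x = 0` and `K` a convex body containing the origin
in its interior this is the usual radial function `ρ_K`. -/
def radial {n : ℕ} (K : Set (Euc n)) (x θ : Euc n) : ℝ :=
  sSup {a : ℝ | 0 ≤ a ∧ x + a • θ ∈ K}

/-- The spherical Lebesgue measure on the unit sphere of the hyperplane `ξ^⊥`
(viewed inside the `(n-1)`-dimensional inner product space `(ℝ ∙ ξ)ᗮ`). -/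
def perpSphereMeasure {n : ℕ} (ξ : Euc n) :
    Measure (sphere (0 : (ℝ ∙ ξ)ᗮ) 1) := volume.toSphere

/-- The spherical Lebesgue measure on the unit sphere `S^{n-1}` of `ℝⁿ`. -/
def sphMeasure (n : ℕ) : Measure (sphere (0 : Euc n) 1) :=
  (volume : Measure (Euc n)).toSphere

/-- The `m`-th dual section function
`A_{K,m,ξ}(t) = (1/(n-1)) ∫_{S^{n-1} ∩ ξ^⊥} ρ_{K - tξ}(θ)^m dθ`. -/
def dualSectionFn {n : ℕ} (K : Set (Euc n)) (m : ℕ) (ξ : Euc n) (t : ℝ) : ℝ :=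
  (1 / (n - 1 : ℝ)) *
    ∫ θ : sphere (0 : (ℝ ∙ ξ)ᗮ) 1,
      radial K (t • ξ) ((θ : (ℝ ∙ ξ)ᗮ) : Euc n) ^ m ∂(perpSphereMeasure ξ)

/-- `K` has a polynomial `m`-th dual section function of degree `N`:
there are continuous functions `a_0, …, a_N` on `S^{n-1}` with
`A_{K,m,ξ}(t) = ∑_{k=0}^N a_k(ξ) t^k` for all `ξ ∈ S^{n-1}` and all
`t ∈ [-ρ_K(-ξ), ρ_K(ξ)]`. -/
def HasPolyDualSectionDeg {n : ℕ} (K : Set (Euc n)) (m N : ℕ) : Prop :=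
  ∃ a : ℕ → (sphere (0 : Euc n) 1 → ℝ),
    (∀ k ≤ N, Continuous (a k)) ∧
    ∀ ξ : sphere (0 : Euc n) 1, ∀ t : ℝ,
      -radial K 0 (-(ξ : Euc n)) ≤ t → t ≤ radial K 0 (ξ : Euc n) →
      dualSectionFn K m (ξ : Euc n) t = ∑ k ∈ Finset.range (N + 1), a k ξ * t ^ k

/-- `K` has a polynomial `m`-th dual section function. -/
def HasPolyDualSection {n : ℕ} (K : Set (Euc n)) (m : ℕ) : Prop :=
  ∃ N : ℕ, HasPolyDualSectionDeg K m N

open Filter Topology Polynomial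

theorem Ring.choose_ne_zero_of_forall_ne_natCast {𝕜 : Type*} [Field 𝕜] [CharZero 𝕜] {a : 𝕜}
    (ha : ∀ i : ℕ, a ≠ i) (k : ℕ) : Ring.choose a k ≠ 0 := by
  rw [Ring.choose_eq_smul, smul_eq_mul, ← eval₂_smulOneHom_eq_smeval, eval₂_eq_eval_map]
  simp only [descPochhammer_map, descPochhammer_eval_eq_prod_range]
  exact mul_ne_zero (by simp [Nat.factorial_ne_zero])
    (Finset.prod_ne_zero_iff.mpr fun i _ => sub_ne_zero.mpr (ha i))

section PowerSeriesUniqueness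

variable {𝕜 : Type*} [NontriviallyNormedField 𝕜]

theorem eq_zero_of_hasSum_mul_pow_eq_zero {d : ℕ → 𝕜} {b : ℝ} (hb : 0 < b)
    (h : ∀ t : 𝕜, ‖t‖ < b → HasSum (fun n => d n * t ^ n) 0) : d = 0 := by
  obtain ⟨t, ht0, htb⟩ := NormedField.exists_norm_lt 𝕜 hb
  have hdecay : Tendsto (fun n => ‖FormalMultilinearSeries.ofScalars 𝕜 d n‖ * ‖t‖₊ ^ n)
      atTop (𝓝 0) := by
    simpa [norm_mul, norm_pow] using (h t htb).summable.tendsto_atTop_zero.norm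
  have hseries : HasFPowerSeriesOnBall 0 (FormalMultilinearSeries.ofScalars 𝕜 d) 0 ‖t‖₊ :=
    { r_le := FormalMultilinearSeries.le_radius_of_tendsto _ hdecay
      r_pos := by simpa using ht0
      hasSum := fun {y} hy => by
        have hyb : ‖y‖ < b := lt_trans (by simpa [enorm_eq_nnnorm] using hy) htb
        simpa [FormalMultilinearSeries.ofScalars_apply_eq, mul_comm] using h y hyb }
  exact (FormalMultilinearSeries.ofScalars_series_eq_zero (E := 𝕜)).mp
    hseries.hasFPowerSeriesAt.eq_zero

theorem Polynomial.hasSum_coeff_mul_pow (p : 𝕜[X]) (t : 𝕜) :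
    HasSum (fun n => p.coeff n * t ^ n) (p.eval t) := by
  rw [eval_eq_sum_range]
  exact hasSum_sum_of_ne_finset_zero fun n hn =>
    by rw [coeff_eq_zero_of_natDegree_lt (by simpa using hn), zero_mul]

theorem Polynomial.coeff_eq_of_hasSum_mul_pow_eq_eval {e : ℕ → 𝕜} {p : 𝕜[X]} {b : ℝ}
    (hb : 0 < b) (h : ∀ t : 𝕜, ‖t‖ < b → HasSum (fun n => e n * t ^ n) (p.eval t)) :
    e = p.coeff :=
  sub_eq_zero.mp <| eq_zero_of_hasSum_mul_pow_eq_zero hb fun t ht => by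
    simpa [sub_mul] using (h t ht).sub (p.hasSum_coeff_mul_pow t)

theorem Polynomial.eq_zero_of_hasSum_mul_pow_two_mul_eq_eval {c : ℕ → 𝕜} {p : 𝕜[X]} {b : ℝ}
    (hb : 0 < b) (h : ∀ t : 𝕜, ‖t‖ < b → HasSum (fun k => c k * t ^ (2 * k)) (p.eval t))
    {k : ℕ} (hk : p.natDegree < 2 * k) : c k = 0 := by
  have hinj : Function.Injective (fun k : ℕ => 2 * k) := fun _ _ => by simp
  set e := Function.extend (fun k : ℕ => 2 * k) c 0
  have he : ∀ k, e (2 * k) = c k := hinj.extend_apply c 0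
  have hcoeff : e = p.coeff := coeff_eq_of_hasSum_mul_pow_eq_eval hb fun t ht => by
    refine (hinj.hasSum_iff fun n hn => ?_).mp ?_
    · simp [e, Function.extend_apply' _ _ _ fun ⟨k, hk⟩ => hn ⟨k, hk⟩]
    · simpa [Function.comp_def, he] using h t ht
  rw [← he, hcoeff, coeff_eq_zero_of_natDegree_lt hk]

end PowerSeriesUniqueness

theorem Real.hasSum_add_rpow (a : ℝ) {s x : ℝ} (hs : 0 < s) (hx : |x| < s) :
    HasSum (fun k => Ring.choose a k * s ^ (a - k) * x ^ k) ((s + x) ^ a) := by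
  have hxs : |x / s| < 1 := by rwa [abs_div, abs_of_pos hs, div_lt_one hs]
  have h := (one_add_rpow_hasFPowerSeriesOnBall_zero (a := a)).hasSum
    (y := x / s) (by simpa [enorm_eq_nnnorm, ← NNReal.coe_lt_coe, abs_div] using hxs)
  simp only [binomialSeries, FormalMultilinearSeries.ofScalars_apply_eq, smul_eq_mul,
    zero_add] at h
  have hterm : (fun k : ℕ => Ring.choose a k * s ^ (a - k) * x ^ k)
      = fun k => s ^ a * (Ring.choose a k * (x / s) ^ k) := by
    ext k
    rw [Real.rpow_sub_natCast hs.ne', div_pow]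
    field_simp
  have hsum : (s + x) ^ a = s ^ a * (1 + x / s) ^ a := by
    rw [← Real.mul_rpow hs.le (by linarith [(abs_lt.mp hxs).1])]
    congr 1
    field_simp
  rw [hterm, hsum]
  exact h.mul_left _

theorem Real.summable_abs_choose_mul_pow (a : ℝ) {u : ℝ} (hu0 : 0 ≤ u) (hu : u < 1) :
    Summable fun k => |Ring.choose a k| * u ^ k := by
  lift u to NNReal using hu0
  have hu' : (u : ENNReal) < (binomialSeries ℝ a).radius :=
    lt_of_lt_of_le (by exact_mod_cast hu) one_add_rpow_hasFPowerSeriesOnBall_zero.r_le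
  simpa [binomialSeries] using (binomialSeries ℝ a).summable_norm_mul_pow hu'

section BinomialIntegral

variable {X : Type*} [MeasurableSpace X] {μ : Measure X} {σ : X → ℝ} {s₀ a : ℝ}

theorem integrable_rpow_sub_natCast (hσ : Measurable σ) (hs₀ : 0 < s₀) (hσs₀ : ∀ y, s₀ ≤ σ y)
    (hint : Integrable (fun y => σ y ^ a) μ) (k : ℕ) :
    Integrable (fun y => σ y ^ (a - k)) μ := by
  refine (hint.div_const (s₀ ^ k)).mono' (hσ.pow_const _).aestronglyMeasurable
    (ae_of_all _ fun y => ?_)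
  have hσy : 0 < σ y := hs₀.trans_le (hσs₀ y)
  rw [Real.norm_of_nonneg (Real.rpow_nonneg hσy.le _), Real.rpow_sub_natCast hσy.ne']
  exact div_le_div_of_nonneg_left (Real.rpow_nonneg hσy.le _) (pow_pos hs₀ k)
    (pow_le_pow_left₀ hs₀.le (hσs₀ y) k)

theorem integral_rpow_sub_natCast_pos [NeZero μ] (hσ : Measurable σ) (hs₀ : 0 < s₀)
    (hσs₀ : ∀ y, s₀ ≤ σ y) (hint : Integrable (fun y => σ y ^ a) μ) (k : ℕ) :
    0 < ∫ y, σ y ^ (a - k) ∂μ := by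
  have hpos : ∀ y, 0 < σ y ^ (a - k) := fun y => Real.rpow_pos_of_pos (hs₀.trans_le (hσs₀ y)) _
  rw [integral_pos_iff_support_of_nonneg (fun y => (hpos y).le)
    (integrable_rpow_sub_natCast hσ hs₀ hσs₀ hint k),
    Set.eq_univ_of_forall fun y => Function.mem_support.mpr (hpos y).ne']
  exact Measure.measure_univ_pos.mpr (NeZero.ne μ)

theorem hasSum_integral_add_rpow (hσ : Measurable σ) (hs₀ : 0 < s₀) (hσs₀ : ∀ y, s₀ ≤ σ y)
    (hint : Integrable (fun y => σ y ^ a) μ) {x : ℝ} (hx : |x| < s₀) :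
    HasSum (fun k : ℕ => Ring.choose a k * (∫ y, σ y ^ (a - k) ∂μ) * x ^ k)
      (∫ y, (σ y + x) ^ a ∂μ) := by
  set F : ℕ → X → ℝ := fun k y => Ring.choose a k * σ y ^ (a - k) * x ^ k
  have hF_int : ∀ k, Integrable (F k) μ := fun k =>
    ((integrable_rpow_sub_natCast hσ hs₀ hσs₀ hint k).const_mul _).mul_const _
  have hF_le : ∀ k y, ‖F k y‖ ≤ |Ring.choose a k| * (|x| / s₀) ^ k * σ y ^ a := by
    intro k y
    have hσy : 0 < σ y := hs₀.trans_le (hσs₀ y)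
    have hratio : (|x| / σ y) ^ k ≤ (|x| / s₀) ^ k :=
      pow_le_pow_left₀ (by positivity) (div_le_div_of_nonneg_left (abs_nonneg x) hs₀ (hσs₀ y)) k
    calc ‖F k y‖ = |Ring.choose a k| * σ y ^ (a - k) * |x| ^ k := by
          simp only [F, Real.norm_eq_abs, abs_mul, abs_pow,
            abs_of_pos (Real.rpow_pos_of_pos hσy _)]
      _ = |Ring.choose a k| * (σ y ^ a * (|x| / σ y) ^ k) := by
          rw [Real.rpow_sub_natCast hσy.ne', div_pow]
          ring
      _ ≤ |Ring.choose a k| * (|x| / s₀) ^ k * σ y ^ a := by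
          rw [mul_comm (σ y ^ a), ← mul_assoc]
          gcongr
  have hF_summable : Summable fun k => ∫ y, ‖F k y‖ ∂μ := by
    refine Summable.of_nonneg_of_le (fun k => integral_nonneg fun y => norm_nonneg _)
      (fun k => ?_) ((Real.summable_abs_choose_mul_pow a (by positivity)
        ((div_lt_one hs₀).mpr hx)).mul_right (∫ y, σ y ^ a ∂μ))
    rw [← integral_const_mul]
    exact integral_mono (hF_int k).norm (hint.const_mul _) (hF_le k)
  have htsum : ∫ y, (σ y + x) ^ a ∂μ = ∫ y, ∑' k, F k y ∂μ :=
    integral_congr_ae <| ae_of_all _ fun y => ((Real.hasSum_add_rpow a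
      (hs₀.trans_le (hσs₀ y)) (hx.trans_le (hσs₀ y))).tsum_eq).symm
  rw [htsum]
  simpa only [F, integral_mul_const, integral_const_mul] using
    hasSum_integral_of_summable_integral_norm hF_int hF_summable

end BinomialIntegral

theorem gauge_pos_of_isBounded {E : Type*} [NormedAddCommGroup E] [NormedSpace ℝ E]
    {s : Set E} (hs : Bornology.IsBounded s) (h0 : s ∈ 𝓝 0) {x : E} (hx : x ≠ 0) :
    0 < gauge s x :=
  (gauge_pos (absorbent_nhds_zero h0) ((NormedSpace.isVonNBounded_iff ℝ).mpr hs)).mpr hx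

section Radial

variable {n : ℕ} {K : Set (Euc n)}

theorem radial_zero_eq_inv_gauge (hK : IsCompact K) (hKc : Convex ℝ K) (h0 : 0 ∈ interior K)
    {θ : Euc n} (hθ : θ ≠ 0) : radial K 0 θ = (gauge K θ)⁻¹ := by
  have hKnhds : K ∈ 𝓝 (0 : Euc n) := mem_interior_iff_mem_nhds.mp h0
  have hg : 0 < gauge K θ := gauge_pos_of_isBounded hK.isBounded hKnhds hθ
  have hset : {a : ℝ | 0 ≤ a ∧ (0 : Euc n) + a • θ ∈ K} = Icc 0 (gauge K θ)⁻¹ := by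
    ext a
    simp only [mem_ofPred_eq, zero_add, mem_Icc, and_congr_right_iff]
    intro ha
    rw [← one_div, le_div_iff₀ hg, ← smul_eq_mul, ← gauge_smul_of_nonneg ha]
    constructor
    · exact gauge_le_one_of_mem
    · intro h
      simpa [hK.isClosed.closure_eq] using (gauge_le_one_iff_mem_closure hKc hKnhds).mp h
  rw [radial, hset, csSup_Icc (inv_nonneg.mpr hg.le)]

theorem radial_zero_pos (hK : IsCompact K) (hKc : Convex ℝ K) (h0 : 0 ∈ interior K)
    {θ : Euc n} (hθ : θ ≠ 0) : 0 < radial K 0 θ := by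
  rw [radial_zero_eq_inv_gauge hK hKc h0 hθ]
  exact inv_pos.mpr (gauge_pos_of_isBounded hK.isBounded (mem_interior_iff_mem_nhds.mp h0) hθ)

theorem continuous_radial_zero_sphere (hK : IsCompact K) (hKc : Convex ℝ K)
    (h0 : 0 ∈ interior K) : Continuous fun θ : sphere (0 : Euc n) 1 => radial K 0 θ := by
  have hKnhds : K ∈ 𝓝 (0 : Euc n) := mem_interior_iff_mem_nhds.mp h0
  have hne : ∀ θ : sphere (0 : Euc n) 1, (θ : Euc n) ≠ 0 := fun θ => ne_zero_of_mem_unit_sphere θ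
  refine Continuous.congr ?_ fun θ => (radial_zero_eq_inv_gauge hK hKc h0 (hne θ)).symm
  exact ((continuous_gauge hKc hKnhds).comp continuous_subtype_val).inv₀ fun θ =>
    (gauge_pos_of_isBounded hK.isBounded hKnhds (hne θ)).ne'

end Radial

theorem integral_rpow_not_polynomial_general
    (n m : ℕ) (hn : 2 ≤ n) (hm : Odd m)
    (K : Set (Euc n)) (hK : IsCompact K) (hKc : Convex ℝ K) (h0 : 0 ∈ interior K)
    (r₀ : ℝ) (hr₀ : r₀ = ⨅ θ : sphere (0 : Euc n) 1, radial K 0 (θ : Euc n)) :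
    ¬ ∃ p : Polynomial ℝ, ∀ t ∈ Set.Ioo (-r₀) r₀,
        (∫ θ : sphere (0 : Euc n) 1,
            (radial K 0 (θ : Euc n) ^ 2 - t ^ 2) ^ ((m : ℝ) / 2) ∂(sphMeasure n))
          = p.eval t := by
  rintro ⟨p, hp⟩
  have : Nontrivial (Euc n) := have : Nonempty (Fin n) := ⟨⟨0, by omega⟩⟩; inferInstance
  have : IsFiniteMeasure (sphMeasure n) :=
    inferInstanceAs (IsFiniteMeasure (volume : Measure (Euc n)).toSphere)
  have : NeZero (sphMeasure n) := ⟨Measure.toSphere_ne_zero _⟩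
  have : Nonempty (sphere (0 : Euc n) 1) :=
    (NormedSpace.sphere_nonempty.mpr zero_le_one).to_subtype
  set ρ : sphere (0 : Euc n) 1 → ℝ := fun θ => radial K 0 θ
  have hρ : Continuous ρ := continuous_radial_zero_sphere hK hKc h0
  obtain ⟨θ₀, hθ₀⟩ : r₀ ∈ range ρ := hr₀ ▸ (isCompact_range hρ).sInf_mem (range_nonempty ρ)
  have hr₀pos : 0 < r₀ := hθ₀ ▸ radial_zero_pos hK hKc h0 (ne_zero_of_mem_unit_sphere θ₀)
  have hr₀le : ∀ θ, r₀ ^ 2 ≤ ρ θ ^ 2 := fun θ =>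
    pow_le_pow_left₀ hr₀pos.le (hr₀ ▸ ciInf_le (isCompact_range hρ).bddBelow θ) 2
  have hσ : Continuous fun θ => ρ θ ^ 2 := hρ.pow 2
  have hint : Integrable (fun θ => (ρ θ ^ 2) ^ ((m : ℝ) / 2)) (sphMeasure n) :=
    (hσ.rpow_const fun _ => Or.inr (by positivity)).integrable_of_hasCompactSupport
      (.of_compactSpace _)
  set I : ℕ → ℝ := fun k => ∫ θ, (ρ θ ^ 2) ^ ((m : ℝ) / 2 - k) ∂(sphMeasure n)
  have hexpand : ∀ t : ℝ, ‖t‖ < r₀ → HasSum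
      (fun k => Ring.choose ((m : ℝ) / 2) k * I k * (-1) ^ k * t ^ (2 * k)) (p.eval t) := by
    intro t ht
    rw [Real.norm_eq_abs] at ht
    have ht2 : |-t ^ 2| < r₀ ^ 2 := by
      simpa [abs_neg, sq_abs] using pow_lt_pow_left₀ ht (abs_nonneg t) two_ne_zero
    have h := hasSum_integral_add_rpow hσ.measurable (pow_pos hr₀pos 2) hr₀le hint ht2
    rw [← hp t (abs_lt.mp ht)]
    convert h using 2 with k
    · rw [neg_pow (t ^ 2), ← pow_mul]
      ring
    · simp only [ρ, sub_eq_add_neg]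
  have hhalf : ∀ i : ℕ, (m : ℝ) / 2 ≠ i := fun i h => by
    obtain ⟨j, rfl⟩ := hm
    field_simp at h
    norm_cast at h
    omega
  have hcoeff : ∀ k, Ring.choose ((m : ℝ) / 2) k * I k * (-1) ^ k ≠ 0 := fun k =>
    mul_ne_zero (mul_ne_zero (Ring.choose_ne_zero_of_forall_ne_natCast hhalf k)
      (integral_rpow_sub_natCast_pos hσ.measurable (pow_pos hr₀pos 2) hr₀le hint k).ne')
      (pow_ne_zero k (neg_ne_zero.mpr one_ne_zero))
  exact hcoeff _ (Polynomial.eq_zero_of_hasSum_mul_pow_two_mul_eq_eval hr₀pos hexpand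
    (k := p.natDegree + 1) (by omega))

/-- For `n ≥ 2`, `m` odd, and a convex body `K ⊂ ℝⁿ` with the origin in
its interior, with `r₀ = min_{θ ∈ S^{n-1}} ρ_K(θ)`, the function
`t ↦ ∫_{S^{n-1}} (ρ_K(θ)² − t²)^{m/2} dθ` does not coincide with any polynomial on the
interval `(−r₀, r₀)`. -/
theorem integral_rpow_not_polynomial
    (n m : ℕ) (hn : 2 ≤ n) (hm : Odd m) (hm1 : 1 ≤ m)
    (K : Set (Euc n)) (hK : IsCompact K) (hKc : Convex ℝ K) (h0 : 0 ∈ interior K)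
    (r₀ : ℝ) (hr₀ : r₀ = ⨅ θ : sphere (0 : Euc n) 1, radial K 0 (θ : Euc n)) :
    ¬ ∃ p : Polynomial ℝ, ∀ t ∈ Set.Ioo (-r₀) r₀,
        (∫ θ : sphere (0 : Euc n) 1,
            (radial K 0 (θ : Euc n) ^ 2 - t ^ 2) ^ ((m : ℝ) / 2) ∂(sphMeasure n))
          = p.eval t :=
  integral_rpow_not_polynomial_general n m hn hm K hK hKc h0 r₀ hr₀
end
end

section
/- Let m be a positive integer and let a ∈ ℝ with |a| ≠ 1. Then lim_{ε→0⁺} (ε/2) ∫_{-1}^{1} (1 − z²)^{(m−2)/2} |z − a|^{−1+ε} dz = (1 − a²)^{(m−2)/2} if |a| < 1, and the limit equals 0 if |a| > 1. -/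
/-!
The kernel `z ↦ (ε/2) |z - a|^(-1+ε)` is an approximate identity at `a` as `ε → 0⁺`: its mass
on `[a - δ, a + δ]` is exactly `δ^ε → 1`, while away from `a` it is bounded by a constant times
`ε`. Hence integrating it against a function integrable on `s` gives `f a` in the limit when `f`
is continuous at an interior point `a` of `s`, and `0` when `a` stays at positive distance from
`s`. The weight `(1 - z²)^((m-2)/2)` is integrable on `[-1, 1]` because `(m-2)/2 > -1`.
-/

open MeasureTheory Filter Set Topology

lemma intervalIntegrable_abs_sub_rpow {p : ℝ} (hp : -1 < p) (a c d : ℝ) :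
    IntervalIntegrable (fun z => |z - a| ^ p) volume c d := by
  have hloc : LocallyIntegrable (fun x : ℝ => |x| ^ p) :=
    locallyIntegrable_of_norm_le_rpow (C := 1) (α := -p) (by simp) (by simp; linarith)
      (ae_of_all _ fun x => by simp [abs_of_nonneg (Real.rpow_nonneg (abs_nonneg x) p)])
      (by fun_prop : Measurable fun x : ℝ => |x| ^ p).aestronglyMeasurable
  simpa using ((hloc.integrableOn_isCompact isCompact_uIcc).intervalIntegrable
    (a := c - a) (b := d - a)).comp_sub_right a

lemma integral_Icc_abs_sub_rpow {p : ℝ} (hp : -1 < p) (a : ℝ) {δ : ℝ} (hδ : 0 ≤ δ) :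
    ∫ z in Icc (a - δ) (a + δ), |z - a| ^ p = 2 * δ ^ (p + 1) / (p + 1) := by
  have habs : ∀ c d : ℝ, IntervalIntegrable (fun x : ℝ => |x| ^ p) volume c d := by
    simpa using intervalIntegrable_abs_sub_rpow hp 0
  have half : ∫ x in (0 : ℝ)..δ, |x| ^ p = δ ^ (p + 1) / (p + 1) := by
    rw [intervalIntegral.integral_congr (g := fun x => x ^ p), integral_rpow (Or.inl hp),
      Real.zero_rpow (by linarith)]
    · simp
    · intro x hx
      rw [uIcc_of_le hδ] at hx
      simp [abs_of_nonneg hx.1]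
  rw [integral_Icc_eq_integral_Ioc, ← intervalIntegral.integral_of_le (by linarith),
    intervalIntegral.integral_comp_sub_right (fun x => |x| ^ p), sub_sub_cancel_left,
    add_sub_cancel_left, ← intervalIntegral.integral_add_adjacent_intervals (habs _ 0) (habs 0 _)]
  have := intervalIntegral.integral_comp_neg (a := 0) (b := δ) (fun x => |x| ^ p)
  simp only [abs_neg, neg_zero] at this
  rw [← this, half]
  ring

lemma intervalIntegrable_one_sub_sq_rpow {q : ℝ} (hq : -1 < q) :
    IntervalIntegrable (fun z : ℝ => (1 - z ^ 2) ^ q) volume (-1) 1 := by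
  have hpos : IntervalIntegrable (fun z : ℝ => (1 - z ^ 2) ^ q) volume 0 1 := by
    have hsing : IntervalIntegrable (fun z : ℝ => (1 - z) ^ q) volume 0 1 := by
      simpa using (intervalIntegral.intervalIntegrable_rpow' hq (a := 1) (b := 0)).comp_sub_left 1
    have hcont : ContinuousOn (fun z : ℝ => (1 + z) ^ q) (uIcc 0 1) := by
      intro z hz
      rw [uIcc_of_le zero_le_one] at hz
      exact (ContinuousAt.rpow_const (f := fun z : ℝ => 1 + z) (by fun_prop)
        (Or.inl (by linarith [hz.1] : (0 : ℝ) < 1 + z).ne')).continuousWithinAt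
    refine (hsing.continuousOn_mul hcont).congr fun z hz => ?_
    rw [uIoc_of_le zero_le_one] at hz
    rw [← Real.mul_rpow (by linarith [hz.1]) (by linarith [hz.2])]
    ring_nf
  have hneg : IntervalIntegrable (fun z : ℝ => (1 - z ^ 2) ^ q) volume (-1) 0 := by
    rw [IntervalIntegrable.iff_comp_neg]
    simpa using hpos.symm
  exact hneg.trans hpos

lemma rpow_le_max_one_inv {x c p : ℝ} (hc : 0 < c) (hcx : c ≤ x) (hp : -1 ≤ p)
    (hp0 : p ≤ 0) : x ^ p ≤ max 1 c⁻¹ := by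
  refine (Real.rpow_le_rpow_of_nonpos hc hcx hp0).trans ?_
  rcases le_total c 1 with hc1 | hc1
  · calc c ^ p ≤ c ^ (-1 : ℝ) := Real.rpow_le_rpow_of_exponent_ge hc hc1 hp
      _ ≤ max 1 c⁻¹ := by rw [Real.rpow_neg_one]; exact le_max_right _ _
  · exact (Real.rpow_le_one_of_one_le_of_nonpos hc1 hp0).trans (le_max_left _ _)

noncomputable def epsKernelIntegral (f : ℝ → ℝ) (s : Set ℝ) (a ε : ℝ) : ℝ :=
  ε / 2 * ∫ z in s, f z * |z - a| ^ (-1 + ε)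

lemma le_abs_sub_of_notMem_Icc {z a δ : ℝ} (hz : z ∉ Icc (a - δ) (a + δ)) : δ ≤ |z - a| :=
  (not_le.mp (mt mem_Icc_iff_abs_le.mp hz)).le.trans_eq (abs_sub_comm a z)

lemma exists_Icc_subset_forall_abs_sub_le {f : ℝ → ℝ} {s : Set ℝ} {a η : ℝ}
    (hsa : s ∈ 𝓝 a) (hfa : ContinuousAt f a) (hη : 0 < η) :
    ∃ δ > 0, δ ≤ 1 ∧ Icc (a - δ) (a + δ) ⊆ s ∧
      ∀ z ∈ Icc (a - δ) (a + δ), |f z - f a| ≤ η := by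
  obtain ⟨r, hr, hball⟩ := Metric.nhds_basis_closedBall.eventually_iff.mp
    ((show ∀ᶠ z in 𝓝 a, z ∈ s from hsa).and
      (hfa.eventually (Metric.closedBall_mem_nhds _ hη)))
  have hsub : Icc (a - min r 1) (a + min r 1) ⊆ Metric.closedBall a r := by
    rw [Real.closedBall_eq_Icc]
    exact Icc_subset_Icc (by linarith [min_le_left r 1]) (by linarith [min_le_left r 1])
  exact ⟨min r 1, lt_min hr one_pos, min_le_right _ _, fun z hz => (hball (hsub hz)).1,
    fun z hz => (hball (hsub hz)).2⟩

section

variable {f : ℝ → ℝ} {s : Set ℝ} {a δ : ℝ}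

lemma integrableOn_mul_abs_sub_rpow_of_le (hs : MeasurableSet s) (hf : IntegrableOn f s)
    (hδ : 0 < δ) (hsa : ∀ z ∈ s, δ ≤ |z - a|) {p : ℝ} (hp : -1 ≤ p) (hp0 : p ≤ 0) :
    IntegrableOn (fun z => f z * |z - a| ^ p) s := by
  refine hf.mul_bdd (c := max 1 δ⁻¹)
    (by fun_prop : Measurable fun z => |z - a| ^ p).aestronglyMeasurable
    ((ae_restrict_iff' hs).mpr (ae_of_all _ fun z hz => ?_))
  rw [Real.norm_of_nonneg (Real.rpow_nonneg (abs_nonneg _) _)]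
  exact rpow_le_max_one_inv hδ (hsa z hz) hp hp0

lemma tendsto_epsKernelIntegral_zero (hs : MeasurableSet s) (hf : IntegrableOn f s)
    (hδ : 0 < δ) (hsa : ∀ z ∈ s, δ ≤ |z - a|) :
    Tendsto (epsKernelIntegral f s a) (𝓝[>] 0) (𝓝 0) := by
  set C := ∫ z in s, ‖f z‖ * max 1 δ⁻¹
  have hbound : ∀ ε ∈ Ioo (0 : ℝ) 1, ‖epsKernelIntegral f s a ε‖ ≤ ε / 2 * C := by
    intro ε hε
    have hI : ‖∫ z in s, f z * |z - a| ^ (-1 + ε)‖ ≤ C := by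
      refine norm_integral_le_of_norm_le (hf.norm.mul_const _)
        ((ae_restrict_iff' hs).mpr (ae_of_all _ fun z hz => ?_))
      rw [norm_mul, Real.norm_of_nonneg (Real.rpow_nonneg (abs_nonneg _) _)]
      exact mul_le_mul_of_nonneg_left
        (rpow_le_max_one_inv hδ (hsa z hz) (by linarith [hε.1]) (by linarith [hε.2]))
        (norm_nonneg _)
    rw [epsKernelIntegral, norm_mul, Real.norm_of_nonneg (by linarith [hε.1])]
    exact mul_le_mul_of_nonneg_left hI (by linarith [hε.1])
  refine squeeze_zero_norm' (eventually_of_mem (Ioo_mem_nhdsGT one_pos) hbound) ?_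
  simpa using tendsto_nhdsWithin_of_tendsto_nhds
    ((continuous_id.div_const 2).mul_const C |>.tendsto 0)

lemma abs_epsKernelIntegral_Icc_sub_le {L η ε : ℝ} (hδ : 0 < δ) (hε : 0 < ε)
    (hf : AEStronglyMeasurable f (volume.restrict (Icc (a - δ) (a + δ))))
    (hfL : ∀ z ∈ Icc (a - δ) (a + δ), |f z - L| ≤ η) :
    |epsKernelIntegral f (Icc (a - δ) (a + δ)) a ε - L * δ ^ ε| ≤ η * δ ^ ε := by
  set w := fun z => |z - a| ^ (-1 + ε)
  have hw : IntegrableOn w (Icc (a - δ) (a + δ)) :=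
    (intervalIntegrable_iff_integrableOn_Icc_of_le (by linarith)).mp
      (intervalIntegrable_abs_sub_rpow (by linarith) a _ _)
  have hmass : ε / 2 * ∫ z in Icc (a - δ) (a + δ), w z = δ ^ ε := by
    rw [integral_Icc_abs_sub_rpow (by linarith) a hδ.le, neg_add_cancel_comm]
    field_simp
  have hfLw : IntegrableOn (fun z => (f z - L) * w z) (Icc (a - δ) (a + δ)) :=
    hw.bdd_mul (hf.sub aestronglyMeasurable_const)
      ((ae_restrict_iff' measurableSet_Icc).mpr (ae_of_all _ hfL))
  have hdiff : epsKernelIntegral f (Icc (a - δ) (a + δ)) a ε - L * δ ^ ε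
      = ε / 2 * ∫ z in Icc (a - δ) (a + δ), (f z - L) * w z := by
    have hsplit : ∫ z in Icc (a - δ) (a + δ), f z * w z
        = (∫ z in Icc (a - δ) (a + δ), (f z - L) * w z)
          + L * ∫ z in Icc (a - δ) (a + δ), w z := by
      rw [← integral_const_mul (μ := volume.restrict (Icc (a - δ) (a + δ))) L w,
        ← integral_add hfLw (hw.const_mul L)]
      exact integral_congr_ae (ae_of_all _ fun z => by ring)
    rw [epsKernelIntegral, hsplit, ← hmass]
    ring
  rw [hdiff, abs_mul, abs_of_pos (half_pos hε), ← Real.norm_eq_abs]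
  calc ε / 2 * ‖∫ z in Icc (a - δ) (a + δ), (f z - L) * w z‖
      ≤ ε / 2 * ∫ z in Icc (a - δ) (a + δ), η * w z := by
        gcongr
        refine norm_integral_le_of_norm_le (hw.const_mul η)
          ((ae_restrict_iff' measurableSet_Icc).mpr (ae_of_all _ fun z hz => ?_))
        rw [norm_mul, Real.norm_of_nonneg (Real.rpow_nonneg (abs_nonneg _) _)]
        exact mul_le_mul_of_nonneg_right (hfL z hz) (Real.rpow_nonneg (abs_nonneg _) _)
    _ = η * δ ^ ε := by rw [integral_const_mul, ← hmass]; ring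

lemma epsKernelIntegral_eq_Icc_add_sdiff {C ε : ℝ} (hs : MeasurableSet s)
    (hf : IntegrableOn f s) (hδ : 0 < δ) (hδs : Icc (a - δ) (a + δ) ⊆ s)
    (hfC : ∀ z ∈ Icc (a - δ) (a + δ), |f z| ≤ C) (hε : ε ∈ Ioo (0 : ℝ) 1) :
    epsKernelIntegral f s a ε = epsKernelIntegral f (Icc (a - δ) (a + δ)) a ε
      + epsKernelIntegral f (s \ Icc (a - δ) (a + δ)) a ε := by
  have hnear : IntegrableOn (fun z => f z * |z - a| ^ (-1 + ε)) (Icc (a - δ) (a + δ)) :=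
    ((intervalIntegrable_iff_integrableOn_Icc_of_le (by linarith)).mp
      (intervalIntegrable_abs_sub_rpow (by linarith [hε.1]) a _ _)).bdd_mul
      (hf.mono_set hδs).aestronglyMeasurable
      ((ae_restrict_iff' measurableSet_Icc).mpr (ae_of_all _ hfC))
  have hfar : IntegrableOn (fun z => f z * |z - a| ^ (-1 + ε)) (s \ Icc (a - δ) (a + δ)) :=
    integrableOn_mul_abs_sub_rpow_of_le (hs.diff measurableSet_Icc) (hf.mono_set sdiff_subset) hδ
      (fun z hz => le_abs_sub_of_notMem_Icc hz.2) (by linarith [hε.1]) (by linarith [hε.2])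
  rw [epsKernelIntegral, epsKernelIntegral, epsKernelIntegral, ← mul_add,
    ← setIntegral_union disjoint_sdiff_right (hs.diff measurableSet_Icc) hnear hfar,
    union_sdiff_cancel hδs]

theorem tendsto_epsKernelIntegral (hs : MeasurableSet s) (hsa : s ∈ 𝓝 a)
    (hf : IntegrableOn f s) (hfa : ContinuousAt f a) :
    Tendsto (epsKernelIntegral f s a) (𝓝[>] 0) (𝓝 (f a)) := by
  rw [Metric.tendsto_nhds]
  intro η hη
  obtain ⟨δ, hδ, hδ1, hδs, hfδ⟩ :=
    exists_Icc_subset_forall_abs_sub_le hsa hfa (by positivity : 0 < η / 3)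
  have hlim : Tendsto
      (fun ε => f a * δ ^ ε + epsKernelIntegral f (s \ Icc (a - δ) (a + δ)) a ε)
      (𝓝[>] 0) (𝓝 (f a)) := by
    simpa using (((Real.continuousAt_const_rpow hδ.ne').tendsto.mono_left
      nhdsWithin_le_nhds).const_mul (f a)).add
      (tendsto_epsKernelIntegral_zero (hs.diff measurableSet_Icc) (hf.mono_set sdiff_subset) hδ
        fun z hz => le_abs_sub_of_notMem_Icc hz.2)
  filter_upwards [Metric.tendsto_nhds.mp hlim (η / 3) (by positivity),
    Ioo_mem_nhdsGT one_pos] with ε hεlim hε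
  have hfC : ∀ z ∈ Icc (a - δ) (a + δ), |f z| ≤ |f a| + η / 3 := fun z hz => by
    linarith [hfδ z hz, abs_sub_abs_le_abs_sub (f z) (f a)]
  have hnear := abs_le.mp <| abs_epsKernelIntegral_Icc_sub_le hδ hε.1
    (hf.mono_set hδs).aestronglyMeasurable hfδ
  have hδε : η / 3 * δ ^ ε ≤ η / 3 :=
    mul_le_of_le_one_right (by positivity) (Real.rpow_le_one hδ.le hδ1 hε.1.le)
  rw [Real.dist_eq, abs_lt] at hεlim ⊢
  rw [epsKernelIntegral_eq_Icc_add_sdiff hs hf hδ hδs hfC hε]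
  constructor <;> linarith [hnear.1, hnear.2, hεlim.1, hεlim.2]

end

theorem limit_eps_integral_abs_rpow_general
    (m : ℕ) (hm : 1 ≤ m) (a : ℝ) :
    (|a| < 1 →
      Tendsto
        (fun ε : ℝ => ε / 2 *
          ∫ z in Set.Icc (-1 : ℝ) 1,
            (1 - z ^ 2) ^ (((m : ℝ) - 2) / 2) * |z - a| ^ (-1 + ε))
        (nhdsWithin 0 (Set.Ioi 0))
        (nhds ((1 - a ^ 2) ^ (((m : ℝ) - 2) / 2)))) ∧
    (1 < |a| →
      Tendsto
        (fun ε : ℝ => ε / 2 *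
          ∫ z in Set.Icc (-1 : ℝ) 1,
            (1 - z ^ 2) ^ (((m : ℝ) - 2) / 2) * |z - a| ^ (-1 + ε))
        (nhdsWithin 0 (Set.Ioi 0))
        (nhds 0)) := by
  have hq : (-1 : ℝ) < ((m : ℝ) - 2) / 2 := by
    have : (1 : ℝ) ≤ m := by exact_mod_cast hm
    linarith
  have hf := (intervalIntegrable_iff_integrableOn_Icc_of_le (by norm_num)).mp
    (intervalIntegrable_one_sub_sq_rpow hq)
  refine ⟨fun ha => ?_, fun ha => ?_⟩
  · have hsq : a ^ 2 < 1 := by nlinarith [sq_abs a, abs_nonneg a]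
    exact tendsto_epsKernelIntegral measurableSet_Icc
      (Icc_mem_nhds (by linarith [neg_abs_le a]) (by linarith [le_abs_self a])) hf
      (ContinuousAt.rpow_const (by fun_prop) (Or.inl (by linarith)))
  · refine tendsto_epsKernelIntegral_zero measurableSet_Icc hf (sub_pos.mpr ha) fun z hz => ?_
    have : |z| ≤ 1 := abs_le.mpr hz
    linarith [abs_sub_abs_le_abs_sub a z, abs_sub_comm a z]

/-- Let `m ≥ 1` and `a ∈ ℝ` with `|a| ≠ 1`. Then
`lim_{ε→0⁺} (ε/2) ∫_{-1}^{1} (1 − z²)^{(m−2)/2} |z − a|^{−1+ε} dz` equals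
`(1 − a²)^{(m−2)/2}` if `|a| < 1`, and equals `0` if `|a| > 1`. -/
theorem limit_eps_integral_abs_rpow
    (m : ℕ) (hm : 1 ≤ m) (a : ℝ) (ha : |a| ≠ 1) :
    (|a| < 1 →
      Tendsto
        (fun ε : ℝ => ε / 2 *
          ∫ z in Set.Icc (-1 : ℝ) 1,
            (1 - z ^ 2) ^ (((m : ℝ) - 2) / 2) * |z - a| ^ (-1 + ε))
        (nhdsWithin 0 (Set.Ioi 0))
        (nhds ((1 - a ^ 2) ^ (((m : ℝ) - 2) / 2)))) ∧
    (1 < |a| →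
      Tendsto
        (fun ε : ℝ => ε / 2 *
          ∫ z in Set.Icc (-1 : ℝ) 1,
            (1 - z ^ 2) ^ (((m : ℝ) - 2) / 2) * |z - a| ^ (-1 + ε))
        (nhdsWithin 0 (Set.Ioi 0))
        (nhds 0)) :=
  limit_eps_integral_abs_rpow_general m hm a
end
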